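/- If a matrix A ∈ M_{k×m} has no identically zero row or column and the number of zero entries of A is strictly less than max{k,m}/min{k,m}, then A has total support. -/

import Mathlib

open Matrix BigOperators

/-- A (possibly rectangular, as long as the index types have the same cardinality)
matrix has support if some generalized permutation diagonal has nonzero product. -/
def HasSupport {R C α : Type*} [Fintype R] [Fintype C] [CommMonoidWithZero α]
    (A : Matrix R C α) : Prop :=
  ∃ σ : R ≃ C, ∏ i, A i (σ i) ≠ 0

/-- Total support: every nonzero entry lies on a nonzero generalized permutation diagonal. -/
def HasTotalSupport {R C α : Type*} [Fintype R] [Fintype C] [CommMonoidWithZero α]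
    (A : Matrix R C α) : Prop :=
  ∀ p q, A p q ≠ 0 → ∃ σ : R ≃ C, σ p = q ∧ ∏ i, A i (σ i) ≠ 0

/-- The Kronecker product `A ⊗ 1_{m×k}` of `A ∈ M_{k×m}` with the all-ones matrix `1_{m×k}`. -/
def kronOnes {R C α : Type*} (A : Matrix R C α) : Matrix (R × C) (C × R) α :=
  Matrix.of fun p q => A p.1 q.1

/-- A rectangular matrix has support if `A ⊗ 1_{m×k}` has support. -/
def RectSupport {R C α : Type*} [Fintype R] [Fintype C] [CommMonoidWithZero α]
    (A : Matrix R C α) : Prop :=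
  HasSupport (kronOnes A)

/-- A rectangular matrix has total support if `A ⊗ 1_{m×k}` has total support. -/
def RectTotalSupport {R C α : Type*} [Fintype R] [Fintype C] [CommMonoidWithZero α]
    (A : Matrix R C α) : Prop :=
  HasTotalSupport (kronOnes A)

/-!
The matrix `A ⊗ 1` is square of size `km`, and by Hall's theorem it has total support as soon as
every nonempty proper set `S` of its rows meets strictly more than `|S|` columns in nonzero
entries: remove the row and column of a nonzero entry and Hall's condition survives. Rows of
`A ⊗ 1` are copies of rows of `A` with each entry repeated `k` times, so if `S` comes from a set
`I` of rows of `A` whose nonzero entries lie in the set `J` of columns, it suffices that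
`|I| m < |J| k`. When `k ≤ m`, either `I` is everything (and then so is `J`, as no column of `A`
is zero), or the `|I| (m - |J|)` zeros of `A` in `I × Jᶜ` force `k |I| (m - |J|) < m`, which
gives the inequality. The case `m < k` follows by transposing.
-/

open Finset Function

variable {R C α : Type*}

namespace Matrix

open Classical in
noncomputable def rowSupport [Fintype C] [Zero α] (A : Matrix R C α) (i : R) : Finset C :=
  {j | A i j ≠ 0}

@[simp]
lemma mem_rowSupport [Fintype C] [Zero α] {A : Matrix R C α} {i : R} {j : C} :
    j ∈ A.rowSupport i ↔ A i j ≠ 0 := by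
  simp [rowSupport]

end Matrix

open Matrix

theorem Finset.exists_injective_apply_eq_of_card_lt_card_biUnion {ι κ : Type*} [Fintype ι]
    [DecidableEq κ] (N : ι → Finset κ)
    (hN : ∀ s : Finset ι, s.Nonempty → s ≠ univ → #s < #(s.biUnion N))
    {p : ι} {q : κ} (hq : q ∈ N p) :
    ∃ f : ι → κ, Injective f ∧ f p = q ∧ ∀ x, f x ∈ N x := by
  classical
  -- Pinning `p` to `q` and banning `q` elsewhere loses at most one neighbour of a set avoiding
  -- `p`, and the strict inequality pays for it.
  let t : ι → Finset κ := fun x => if x = p then {q} else (N x).erase q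
  have hall_avoiding : ∀ s : Finset ι, p ∉ s → #s ≤ #(s.biUnion t) := by
    intro s hp
    rcases s.eq_empty_or_nonempty with rfl | hs
    · simp
    have hsub : (s.biUnion N).erase q ⊆ s.biUnion t := by
      intro y hy
      obtain ⟨hyq, hy⟩ := mem_erase.1 hy
      obtain ⟨x, hx, hxy⟩ := mem_biUnion.1 hy
      have hxp : x ≠ p := ne_of_mem_of_not_mem hx hp
      exact mem_biUnion.2 ⟨x, hx, by simp [t, hxp, hyq, hxy]⟩
    have hstrict := hN s hs fun hsu => hp (hsu ▸ mem_univ p)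
    have herase := pred_card_le_card_erase (s := s.biUnion N) (a := q)
    have hle := card_le_card hsub
    omega
  have hall : ∀ s : Finset ι, #s ≤ #(s.biUnion t) := by
    intro s
    by_cases hp : p ∈ s
    · have hq' : q ∉ (s.erase p).biUnion t := by
        simp +contextual [t]
      calc #s = #(s.erase p) + 1 := (card_erase_add_one hp).symm
        _ ≤ #((s.erase p).biUnion t) + 1 := by gcongr; exact hall_avoiding _ (notMem_erase p s)
        _ = #(insert q ((s.erase p).biUnion t)) := (card_insert_of_notMem hq').symm
        _ ≤ #(s.biUnion t) := card_le_card <| insert_subset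
              (mem_biUnion.2 ⟨p, hp, by simp [t]⟩) (biUnion_subset_biUnion_of_subset_left _
              (erase_subset p s))
    · exact hall_avoiding s hp
  obtain ⟨f, hf, hft⟩ := (all_card_le_biUnion_card_iff_existsInjective' t).1 hall
  have hfp : f p = q := by simpa [t] using hft p
  refine ⟨f, hf, hfp, fun x => ?_⟩
  by_cases hxp : x = p
  · subst hxp
    rwa [hfp]
  · have hfx := hft x
    simp only [t, if_neg hxp] at hfx
    exact mem_of_mem_erase hfx

theorem hasTotalSupport_of_card_lt_card_biUnion_rowSupport [Fintype R] [Fintype C] [DecidableEq C]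
    [CommMonoidWithZero α] [NoZeroDivisors α] [Nontrivial α] (B : Matrix R C α)
    (hcard : Fintype.card R = Fintype.card C)
    (hB : ∀ s : Finset R, s.Nonempty → s ≠ univ → #s < #(s.biUnion B.rowSupport)) :
    HasTotalSupport B := by
  intro p q hpq
  obtain ⟨f, hf, hfp, hfB⟩ :=
    exists_injective_apply_eq_of_card_lt_card_biUnion B.rowSupport hB (mem_rowSupport.2 hpq)
  have hbij : Bijective f := (Fintype.bijective_iff_injective_and_card f).2 ⟨hf, hcard⟩
  exact ⟨Equiv.ofBijective f hbij, hfp, prod_ne_zero_iff.2 fun x _ => mem_rowSupport.1 (hfB x)⟩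

theorem HasTotalSupport.of_transpose [Fintype R] [Fintype C] [CommMonoidWithZero α]
    {B : Matrix R C α} (h : HasTotalSupport Bᵀ) : HasTotalSupport B := by
  intro p q hpq
  obtain ⟨σ, hσq, hσ⟩ := h q p hpq
  refine ⟨σ.symm, σ.symm_apply_eq.2 hσq.symm, ?_⟩
  rwa [← σ.prod_comp, funext fun c => congrArg (B (σ c)) (σ.symm_apply_apply c)]

lemma kronOnes_transpose (A : Matrix R C α) : kronOnes Aᵀ = (kronOnes A)ᵀ := rfl

lemma rowSupport_kronOnes [Fintype R] [Fintype C] [Zero α] (A : Matrix R C α) (x : R × C) :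
    (kronOnes A).rowSupport x = A.rowSupport x.1 ×ˢ univ := by
  ext y
  simp [kronOnes]

lemma biUnion_rowSupport_kronOnes [Fintype R] [Fintype C] [DecidableEq R] [DecidableEq C]
    [Zero α] (A : Matrix R C α) (s : Finset (R × C)) :
    s.biUnion (kronOnes A).rowSupport = (s.image Prod.fst).biUnion A.rowSupport ×ˢ univ := by
  ext y
  simp [rowSupport_kronOnes]

lemma card_mul_card_compl_biUnion_rowSupport_le [Fintype R] [Fintype C] [DecidableEq C] [Zero α]
    (A : Matrix R C α) (I : Finset R) :
    #I * #(I.biUnion A.rowSupport)ᶜ ≤ {p : R × C | A p.1 p.2 = 0}.ncard := by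
  rw [← card_product, ← Set.ncard_coe_finset]
  refine Set.ncard_le_ncard ?_ (Set.toFinite _)
  intro p hp
  simp only [coe_product, Set.mem_prod, mem_coe, mem_compl, mem_biUnion, mem_rowSupport,
    not_exists, not_and] at hp
  simpa using hp.2 p.1 hp.1

lemma Nat.mul_lt_mul_of_mul_mul_sub_lt {a c k m : ℕ} (ha : 0 < a) (hak : a < k) (hcm : c ≤ m)
    (h : k * (a * (m - c)) < m) : a * m < c * k := by
  obtain ⟨d, rfl⟩ := Nat.exists_eq_add_of_le hcm
  rw [Nat.add_sub_cancel_left] at h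
  have had : a * d < c := by nlinarith
  calc a * (c + d) < a * c + c := by rw [mul_add]; exact Nat.add_lt_add_left had _
    _ = c * (a + 1) := by ring
    _ ≤ c * k := Nat.mul_le_mul_left c hak

theorem card_lt_card_biUnion_rowSupport_kronOnes [Fintype R] [Fintype C] [DecidableEq R]
    [DecidableEq C] [Zero α] (A : Matrix R C α) (hcol : ∀ j, ∃ i, A i j ≠ 0)
    (hz : Fintype.card R * {p : R × C | A p.1 p.2 = 0}.ncard < Fintype.card C)
    (s : Finset (R × C)) (hs : s.Nonempty) (hsu : s ≠ univ) :
    #s < #(s.biUnion (kronOnes A).rowSupport) := by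
  rw [biUnion_rowSupport_kronOnes, card_product, card_univ]
  set I := s.image Prod.fst
  set J := I.biUnion A.rowSupport
  rcases (card_le_univ I).lt_or_eq with hI | hI
  · have hsI : #s ≤ #I * Fintype.card C := by
      rw [← card_univ, ← card_product]
      exact card_le_card fun x hx => mem_product.2 ⟨mem_image_of_mem _ hx, mem_univ _⟩
    have hzeros : Fintype.card R * (#I * (Fintype.card C - #J)) < Fintype.card C := by
      rw [← card_compl]
      exact lt_of_le_of_lt (Nat.mul_le_mul_left _ (card_mul_card_compl_biUnion_rowSupport_le A I))
        hz
    exact hsI.trans_lt (Nat.mul_lt_mul_of_mul_mul_sub_lt (card_pos.2 (hs.image _)) hI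
      (card_le_univ J) hzeros)
  · have hJ : J = univ := eq_univ_of_forall fun j => by
      obtain ⟨i, hi⟩ := hcol j
      exact mem_biUnion.2 ⟨i, eq_univ_of_card I hI ▸ mem_univ i, mem_rowSupport.2 hi⟩
    rw [hJ, card_univ, mul_comm, ← Fintype.card_prod]
    exact (card_lt_iff_ne_univ s).2 hsu

lemma ncard_zeros_transpose [Zero α] (A : Matrix R C α) :
    {p : C × R | Aᵀ p.1 p.2 = 0}.ncard = {p : R × C | A p.1 p.2 = 0}.ncard := by
  rw [← Set.ncard_image_of_injective _ Prod.swap_injective, Set.image_swap_eq_preimage_swap]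
  rfl

theorem rectTotalSupport_of_card_mul_ncard_zeros_lt [Fintype R] [Fintype C]
    [CommMonoidWithZero α] [NoZeroDivisors α] [Nontrivial α] (A : Matrix R C α)
    (hcol : ∀ j, ∃ i, A i j ≠ 0)
    (hz : Fintype.card R * {p : R × C | A p.1 p.2 = 0}.ncard < Fintype.card C) :
    RectTotalSupport A := by
  classical
  exact hasTotalSupport_of_card_lt_card_biUnion_rowSupport (kronOnes A)
    (by simp [Fintype.card_prod, mul_comm]) (card_lt_card_biUnion_rowSupport_kronOnes A hcol hz)

lemma Nat.mul_lt_of_cast_lt_div {K : Type*} [Field K] [LinearOrder K] [IsStrictOrderedRing K]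
    {a b n : ℕ} (h : (a : K) < b / n) : n * a < b := by
  rcases n.eq_zero_or_pos with rfl | hn
  · rw [Nat.cast_zero, div_zero] at h
    exact absurd h (Nat.cast_nonneg a).not_gt
  · rw [lt_div_iff₀ (by exact_mod_cast hn)] at h
    exact_mod_cast (mul_comm (n : K) a ▸ h)

/-- If `A ∈ M_{k×m}` has no identically zero row or column and fewer than
`max{k,m}/min{k,m}` zero entries, then `A` has total support. -/
theorem rectTotalSupport_of_no_zero_lines {k m : ℕ} (A : Matrix (Fin k) (Fin m) ℝ)
    (hrow : ∀ i, ∃ j, A i j ≠ 0) (hcol : ∀ j, ∃ i, A i j ≠ 0)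
    (hz : ({p : Fin k × Fin m | A p.1 p.2 = 0}.ncard : ℝ) <
      (max k m : ℝ) / (min k m : ℝ)) :
    RectTotalSupport A := by
  rw [← Nat.cast_max, ← Nat.cast_min] at hz
  have hz' := Nat.mul_lt_of_cast_lt_div hz
  rcases le_total k m with hkm | hmk
  · rw [min_eq_left hkm, max_eq_right hkm] at hz'
    exact rectTotalSupport_of_card_mul_ncard_zeros_lt A hcol (by simpa using hz')
  · rw [min_eq_right hmk, max_eq_left hmk, ← ncard_zeros_transpose] at hz'
    refine HasTotalSupport.of_transpose ?_
    rw [← kronOnes_transpose]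
    exact rectTotalSupport_of_card_mul_ncard_zeros_lt Aᵀ hrow (by simpa using hz')
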